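/- arXiv:math/0210354 — 3 statements merged into one kernel-verified Lean document; each statement's English description precedes it below -/
import Mathlib

section
/- Let G be an ω-precompact, sequentially h-complete, h-complete Hausdorff topological group. Then G is topologically isomorphic to the projective limit of its metrizable quotients. -/
open Topology Pointwise

universe u

section Defs
variable (G : Type u) [Group G] [TopologicalSpace G] [IsTopologicalGroup G]

/-- Sequential completeness w.r.t. the canonical group uniformity. -/
def SeqComplete : Prop :=
  letI := IsTopologicalGroup.rightUniformSpace G
  ∀ u : ℕ → G, CauchySeq u → ∃ x, Filter.Tendsto u Filter.atTop (𝓝 x)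

/-- `G` is sequentially h-complete: every continuous homomorphic image is
sequentially complete. -/
def SeqHComplete : Prop :=
  ∀ (H : Type u) [Group H] [TopologicalSpace H] [IsTopologicalGroup H] [T2Space H]
    (f : G →* H), Continuous f → Function.Surjective f → SeqComplete H

/-- `G` is ω-precompact. -/
def OmegaPrecompact : Prop :=
  ∀ U ∈ 𝓝 (1 : G), ∃ F : Set G, F.Countable ∧ U * F = Set.univ

/-- `G` has countable pseudocharacter. -/
def CountablePseudocharacter : Prop :=
  ∃ s : ℕ → Set G, (∀ n, IsOpen (s n)) ∧ (⋂ n, s n) = ({1} : Set G)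

/-- `G` is precompact. -/
def GroupPrecompact : Prop :=
  ∀ U ∈ 𝓝 (1 : G), ∃ F : Set G, F.Finite ∧ U * F = Set.univ

/-- `G` is h-complete: every continuous homomorphic image is complete. -/
def HComplete : Prop :=
  ∀ (H : Type u) [Group H] [TopologicalSpace H] [IsTopologicalGroup H] [T2Space H]
    (f : G →* H), Continuous f → Function.Surjective f →
      letI := IsTopologicalGroup.rightUniformSpace H
      CompleteSpace H

/-- `G` is maximally almost periodic. -/
def MAP : Prop :=
  ∃ (K : Type u) (_ : Group K) (_ : TopologicalSpace K),
    ∃ (_ : IsTopologicalGroup K) (_ : T2Space K) (_ : CompactSpace K),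
      ∃ f : G →* K, Continuous f ∧ Function.Injective f

/-- `G` is minimally almost periodic. -/
def MinAP : Prop :=
  ∀ (K : Type u) [Group K] [TopologicalSpace K] [IsTopologicalGroup K] [T2Space K]
    [CompactSpace K] (f : G →* K), Continuous f → ∀ g : G, f g = 1

/-- `G` is c-compact. -/
def CCompact : Prop :=
  ∀ (H : Type u) [Group H] [TopologicalSpace H] [IsTopologicalGroup H] [T2Space H]
    (S : Subgroup (G × H)), IsClosed (S : Set (G × H)) →
      IsClosed ((S.map (MonoidHom.snd G H) : Subgroup H) : Set H)

/-- `G` is totally minimal. -/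
def TotallyMinimal : Prop :=
  ∀ (H : Type u) [Group H] [TopologicalSpace H] [IsTopologicalGroup H] [T2Space H]
    (f : G →* H), Continuous f → Function.Surjective f → IsOpenMap f

/-- `G` is minimal. -/
def MinimalGroup : Prop :=
  ∀ (H : Type u) [Group H] [TopologicalSpace H] [IsTopologicalGroup H] [T2Space H]
    (f : G →* H), Continuous f → Function.Bijective f → IsOpenMap f

end Defs

/-- `X` has a countable network. -/
def HasCountableNetwork (X : Type u) [TopologicalSpace X] : Prop :=
  ∃ N : Set (Set X), N.Countable ∧ ∀ U : Set X, IsOpen U → ∃ S ⊆ N, ⋃₀ S = U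

/-- The index of metrizable quotients of `G`. -/
def MetQuotIdx (G : Type u) [Group G] [TopologicalSpace G] [IsTopologicalGroup G] :=
  {N : Subgroup G // N.Normal ∧ IsClosed (N : Set G) ∧
    TopologicalSpace.MetrizableSpace (G ⧸ N)}

/-- The canonical map from `G` into the product of its metrizable quotients. -/
def canonMap (G : Type u) [Group G] [TopologicalSpace G] [IsTopologicalGroup G] :
    G → ∀ N : MetQuotIdx G, G ⧸ N.val := fun g _ => QuotientGroup.mk g

/-- The projective limit of the metrizable quotients of `G`. -/
def projLimit (G : Type u) [Group G] [TopologicalSpace G] [IsTopologicalGroup G] :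
    Set (∀ N : MetQuotIdx G, G ⧸ N.val) :=
  {x | ∀ (N M : MetQuotIdx G) (h : N.val ≤ M.val),
    haveI := N.prop.1
    haveI := M.prop.1
    QuotientGroup.map N.val M.val (MonoidHom.id G) (fun _ ha => h ha) (x N) = x M}

/-!
Every identity neighbourhood `U` contains a closed normal subgroup `N` with `G ⧸ N` metrizable.
By ω-narrowness there is a sequence of symmetric neighbourhoods `V n ⊆ U` with
`V (n + 1) ^ 2 ⊆ V n`, each containing all conjugates of some later one; `N = ⋂ V n`, and the
images of the `V n` generate a first countable Hausdorff group topology on `G ⧸ N`, coarser than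
the quotient topology. It is sequentially complete by sequential h-completeness, hence Baire. A
finer such sequence inside any given neighbourhood `W` gives a finer such topology on a quotient
of `G`, and the Banach–Baire open mapping argument (ω-narrowness gives almost openness) shows that
the map from it onto `G ⧸ N` is open. So some `V n` lies in `W * N`: the quotient topology of
`G ⧸ N` has the countable basis given by the images of the `V n`.

Hence `G` embeds into the product of its metrizable quotients, whose kernels are directed. A thread
of the projective limit is a directed family of closed cosets that is Cauchy, and `G` is complete
by h-completeness, so the thread comes from a point of `G`.
-/

open Filter Set Function Uniformity

attribute [local instance] IsTopologicalGroup.rightUniformSpace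

theorem exists_seq_of_forall_exists {α : Type*} {P : ℕ → α → Prop} {R : ℕ → α → α → Prop}
    {a : α} (ha : P 0 a) (h : ∀ n x, P n x → ∃ y, R n x y ∧ P (n + 1) y) :
    ∃ s : ℕ → α, s 0 = a ∧ ∀ n, P n (s n) ∧ R n (s n) (s (n + 1)) := by
  choose next hnext using h
  let t : (n : ℕ) → {x // P n x} :=
    fun n => Nat.rec ⟨a, ha⟩ (fun n x => ⟨next n x x.2, (hnext n x x.2).2⟩) n
  refine ⟨fun n => (t n).1, rfl, fun n => ?_⟩
  exact ⟨(t n).2, (hnext n _ (t n).2).1⟩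

theorem mul_inv_mem_of_forall_succ {G : Type*} [Group G] {A : ℕ → Set G}
    (hmul : ∀ n, A (n + 1) * A (n + 1) ⊆ A n) (hone : ∀ n, (1 : G) ∈ A n) {s : ℕ → G}
    (hs : ∀ n, s (n + 1) * (s n)⁻¹ ∈ A (n + 1)) {n m : ℕ} (hnm : n ≤ m) :
    s m * (s n)⁻¹ ∈ A n := by
  obtain ⟨k, rfl⟩ := Nat.exists_eq_add_of_le hnm
  clear hnm
  induction k generalizing n with
  | zero => simpa using hone n
  | succ k ih =>
    rw [show n + (k + 1) = n + 1 + k by omega]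
    exact hmul n ⟨_, ih, _, hs n, by group⟩

section TopologicalGroup

variable {G : Type*} [Group G] [TopologicalSpace G] [IsTopologicalGroup G]

theorem cauchySeq_of_mul_inv_mem {A : ℕ → Set G} (hA : (𝓝 (1 : G)).HasBasis (fun _ => True) A)
    {s : ℕ → G} (hs : ∀ n m, n ≤ m → s m * (s n)⁻¹ ∈ A n) : CauchySeq s := by
  have hbasis : (𝓤 G).HasBasis (fun _ => True)
      fun n => (fun p : G × G => p.2 * p.1⁻¹) ⁻¹' (A n)⁻¹ := by
    rw [uniformity_eq_comap_nhds_one', ← nhds_one_symm']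
    simpa only [image_inv_eq_inv] using (hA.map Inv.inv).comap fun p : G × G => p.2 * p.1⁻¹
  rw [hbasis.cauchySeq_iff']
  exact fun n _ => ⟨n, fun m hm => by simpa using hs n m hm⟩

theorem IsTopologicalGroup.firstCountableTopology_of_nhds_one
    [(𝓝 (1 : G)).IsCountablyGenerated] : FirstCountableTopology G :=
  ⟨fun x => map_mul_left_nhds_one x ▸ inferInstance⟩

theorem IsTopologicalGroup.isCountablyGenerated_uniformity [FirstCountableTopology G] :
    (𝓤 G).IsCountablyGenerated := by
  rw [uniformity_eq_comap_nhds_one']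
  infer_instance

theorem IsTopologicalGroup.metrizableSpace [T0Space G] [FirstCountableTopology G] :
    TopologicalSpace.MetrizableSpace G :=
  have := IsTopologicalGroup.isCountablyGenerated_uniformity (G := G)
  UniformSpace.metrizableSpace

end TopologicalGroup

theorem SeqComplete.baireSpace {G : Type u} [Group G] [TopologicalSpace G] [IsTopologicalGroup G]
    [FirstCountableTopology G] (h : SeqComplete G) : BaireSpace G :=
  have := IsTopologicalGroup.isCountablyGenerated_uniformity (G := G)
  have : CompleteSpace G := UniformSpace.complete_of_cauchySeq_tendsto h
  inferInstance

section OpenMapping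

variable {H K : Type u} [Group H] [TopologicalSpace H] [IsTopologicalGroup H]
  [Group K] [TopologicalSpace K] [IsTopologicalGroup K] {f : H →* K}

theorem OmegaPrecompact.closure_image_mem_nhds_one [BaireSpace K] (hω : OmegaPrecompact H)
    (hsurj : Surjective f) {U : Set H} (hU : U ∈ 𝓝 1) : closure (f '' U) ∈ 𝓝 1 := by
  obtain ⟨V, hV, -, hVinv, hVU⟩ := exists_closed_nhds_one_inv_eq_mul_subset hU
  obtain ⟨F, hFc, hVF⟩ := hω V hV
  have := hFc.to_subtype
  have hcover : ⋃ h : F, (· * (f h)⁻¹) ⁻¹' closure (f '' V) = univ := by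
    refine eq_univ_of_forall fun y => ?_
    obtain ⟨x, rfl⟩ := hsurj y
    obtain ⟨v, hv, h, hh, rfl⟩ : x ∈ V * F := hVF ▸ mem_univ x
    exact mem_iUnion.2 ⟨⟨h, hh⟩, subset_closure ⟨v, hv, by simp⟩⟩
  obtain ⟨⟨h, _⟩, b, hb⟩ := nonempty_interior_of_iUnion_of_closed
    (fun _ => isClosed_closure.preimage (continuous_mul_const _)) hcover
  set a := b * (f h)⁻¹
  have ha : closure (f '' V) ∈ 𝓝 a :=
    mem_of_superset ((isOpenMap_mul_right _).image_mem_nhds (mem_interior_iff_mem_nhds.1 hb))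
      (image_preimage_subset _ _)
  refine mem_of_superset ((continuous_const_mul a).continuousAt.preimage_mem_nhds
    (by simpa using ha)) fun y hy => ?_
  -- `a⁻¹ • closure (f '' V)` is a neighbourhood of `1` inside `closure (f '' (V⁻¹ * V))`
  have key : a⁻¹ * (a * y) ∈ closure (f '' U) :=
    map_mem_closure₂ (f := fun x z => x⁻¹ * z) (continuous_fst.inv.mul continuous_snd)
      (mem_of_mem_nhds ha) hy fun _ ⟨v, hv, hva⟩ _ ⟨w, hw, hwb⟩ =>
        ⟨v⁻¹ * w, hVU ⟨v⁻¹, hVinv ▸ inv_mem_inv.2 hv, w, hw, rfl⟩, by simp [← hva, ← hwb]⟩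
  simpa using key

theorem closure_image_subset_image_closure [T2Space K] (hH : SeqComplete H) (hf : Continuous f)
    (halmost : ∀ U ∈ 𝓝 (1 : H), closure (f '' U) ∈ 𝓝 (1 : K)) {A : ℕ → Set H}
    (hA : (𝓝 (1 : H)).HasAntitoneBasis A) (hmul : ∀ n, A (n + 1) * A (n + 1) ⊆ A n) :
    closure (f '' A 1) ⊆ f '' closure (A 0) := by
  intro y hy
  have step : ∀ n p, y * (f p)⁻¹ ∈ closure (f '' A (n + 1)) →
      ∃ q, q * p⁻¹ ∈ A (n + 1) ∧ y * (f q)⁻¹ ∈ closure (f '' A (n + 1 + 1)) := by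
    intro n p hp
    have hnhds : {w | y * (f p)⁻¹ * w⁻¹ ∈ closure (f '' A (n + 1 + 1))} ∈ 𝓝 (y * (f p)⁻¹) :=
      (continuous_const.mul continuous_inv).continuousAt.preimage_mem_nhds
        (by simpa using halmost _ (hA.mem _))
    obtain ⟨_, hw, x, hx, rfl⟩ := mem_closure_iff_nhds.1 hp _ hnhds
    exact ⟨x * p, by simpa using hx, by simpa [mul_assoc] using hw⟩
  obtain ⟨s, hs0, hs⟩ := exists_seq_of_forall_exists (R := fun n p q => q * p⁻¹ ∈ A (n + 1))
    (a := 1) (by simpa using hy) step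
  have hsA : ∀ n m, n ≤ m → s m * (s n)⁻¹ ∈ A n := fun n m =>
    mul_inv_mem_of_forall_succ hmul (fun n => mem_of_mem_nhds (hA.mem n)) (fun n => (hs n).2)
  obtain ⟨t, ht⟩ := hH s (cauchySeq_of_mul_inv_mem hA.toHasBasis hsA)
  refine ⟨t, mem_closure_of_tendsto ht (Eventually.of_forall fun n => by
    simpa [hs0] using hsA 0 n n.zero_le), ?_⟩
  have hclosure : Tendsto (fun n => y * (f (s n))⁻¹) atTop (𝓝 1) := by
    refine (closed_nhds_basis 1).tendsto_right_iff.2 fun N ⟨hN, hNc⟩ => ?_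
    obtain ⟨i, hi⟩ := hA.mem_iff.1 ((hf.tendsto' 1 1 (map_one f)) hN)
    filter_upwards [eventually_ge_atTop i] with n hn
    exact closure_minimal (image_subset_iff.2 ((hA.antitone (by omega)).trans hi)) hNc (hs n).1
  have hys : Tendsto (fun n => f (s n)) atTop (𝓝 y) := by
    simpa only [mul_inv_rev, inv_inv, inv_mul_cancel_right, inv_one, one_mul] using
      hclosure.inv.mul_const y
  exact tendsto_nhds_unique ((hf.tendsto t).comp ht) hys

theorem OmegaPrecompact.isOpenMap [FirstCountableTopology H] [T2Space K] [BaireSpace K]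
    (hω : OmegaPrecompact H) (hH : SeqComplete H) (hf : Continuous f) (hsurj : Surjective f) :
    IsOpenMap f := by
  rw [IsTopologicalGroup.isOpenMap_iff_nhds_one]
  intro V hV
  obtain ⟨C, hC, hCc, hCV⟩ := exists_mem_nhds_isClosed_subset (mem_map.1 hV)
  obtain ⟨u, hu, humul⟩ := IsTopologicalGroup.exists_antitone_basis_nhds_one H
  obtain ⟨k, hk⟩ := hu.mem_iff.1 hC
  have hA : (𝓝 (1 : H)).HasAntitoneBasis (fun n => u (n + k)) :=
    hu.comp_mono (monotone_id.add_const k) (tendsto_add_atTop_nat k)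
  have hsub := closure_image_subset_image_closure hH hf
    (fun U hU => hω.closure_image_mem_nhds_one hsurj hU) hA
    (fun n => by simpa [add_right_comm] using humul (n + k))
  refine mem_of_superset (hω.closure_image_mem_nhds_one hsurj (hA.mem 1)) (hsub.trans ?_)
  exact image_subset_iff.2 ((closure_minimal (by simpa using hk) hCc).trans hCV)

end OpenMapping

theorem OmegaPrecompact.of_surjective {G H : Type u} [Group G] [TopologicalSpace G]
    [IsTopologicalGroup G] [Group H] [TopologicalSpace H] [IsTopologicalGroup H]
    (hω : OmegaPrecompact G) {f : G →* H} (hf : Continuous f) (hsurj : Surjective f) :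
    OmegaPrecompact H := by
  intro U hU
  obtain ⟨F, hFc, hUF⟩ := hω _ ((hf.tendsto' 1 1 (map_one f)) hU)
  refine ⟨f '' F, hFc.image f, eq_univ_of_forall fun y => ?_⟩
  obtain ⟨x, rfl⟩ := hsurj y
  obtain ⟨u, hu, v, hv, rfl⟩ : x ∈ f ⁻¹' U * F := hUF ▸ mem_univ x
  exact ⟨f u, hu, f v, mem_image_of_mem f hv, (map_mul f u v).symm⟩

theorem OmegaPrecompact.exists_conj_subset {G : Type u} [Group G] [TopologicalSpace G]
    [IsTopologicalGroup G] (hω : OmegaPrecompact G) {U : Set G} (hU : U ∈ 𝓝 1) :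
    ∃ D : ℕ → Set G, (∀ i, D i ∈ 𝓝 1) ∧ ∀ g : G, ∃ i, ∀ x ∈ D i, g * x * g⁻¹ ∈ U := by
  obtain ⟨A₁, hA₁, hA₁U⟩ := exists_nhds_one_split hU
  obtain ⟨A, hA, -, hAinv, hAA₁⟩ := exists_closed_nhds_one_inv_eq_mul_subset hA₁
  obtain ⟨F, hFc, hAF⟩ := hω A hA
  obtain ⟨-, -, f₀, hf₀, -⟩ : (1 : G) ∈ A * F := hAF ▸ mem_univ 1
  obtain ⟨f, rfl⟩ := hFc.exists_eq_range ⟨f₀, hf₀⟩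
  refine ⟨fun i => (fun x => f i * x * (f i)⁻¹) ⁻¹' A, fun i => ?_, fun g => ?_⟩
  · exact (by fun_prop : Continuous fun x => f i * x * (f i)⁻¹).continuousAt.preimage_mem_nhds
      (by simpa using hA)
  · obtain ⟨a, ha, _, ⟨i, rfl⟩, rfl⟩ : g ∈ A * range f := hAF ▸ mem_univ g
    refine ⟨i, fun x hx => ?_⟩
    -- conjugating by `a * f i` is conjugating by `f i` into `A`, then by `a ∈ A`
    have hmem : a * (f i * x * (f i)⁻¹) * a⁻¹ ∈ U :=
      hA₁U _ (hAA₁ ⟨a, ha, _, hx, rfl⟩) _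
        (hAA₁ ⟨a⁻¹, hAinv ▸ inv_mem_inv.2 ha, 1, mem_of_mem_nhds hA, mul_one _⟩)
    simpa [mul_assoc] using hmem

/-- `x (n + 1)` is computed from `x n` and from `x j`, where `(j, i) = Nat.unpair n`: so every
earlier term `x j` is revisited once for each index `i`. -/
def unpairRec {α : Type*} (x₀ : α) (step : ℕ → α → α → ℕ → α) : ℕ → α
  | 0 => x₀
  | n + 1 => step n (unpairRec x₀ step n) (unpairRec x₀ step n.unpair.1) n.unpair.2
decreasing_by
  · exact n.lt_succ_self
  · exact n.unpair_left_le.trans_lt n.lt_succ_self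

theorem unpairRec_succ {α : Type*} (x₀ : α) (step : ℕ → α → α → ℕ → α) (n : ℕ) :
    unpairRec x₀ step (n + 1) =
      step n (unpairRec x₀ step n) (unpairRec x₀ step n.unpair.1) n.unpair.2 := by
  rw [unpairRec]

/-- The data of a first countable group topology on `G ⧸ ker`, see `NhdsChain.Quot`. -/
structure NhdsChain (G : Type u) [Group G] [TopologicalSpace G] where
  set : ℕ → Set G
  mem_nhds : ∀ n, set n ∈ 𝓝 (1 : G)
  inv_eq : ∀ n, (set n)⁻¹ = set n
  mul_subset : ∀ n, set (n + 1) * set (n + 1) ⊆ set n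
  exists_conj_subset : ∀ n (g : G), ∃ m, ∀ x ∈ set m, g * x * g⁻¹ ∈ set n

theorem OmegaPrecompact.exists_nhdsChain {G : Type u} [Group G] [TopologicalSpace G]
    [IsTopologicalGroup G] (hω : OmegaPrecompact G) (T : ℕ → Set G) (hT : ∀ n, T n ∈ 𝓝 1) :
    ∃ V : NhdsChain G, ∀ n, V.set (n + 1) ⊆ T n := by
  choose D hD hDconj using fun U : {U : Set G // U ∈ 𝓝 1} => hω.exists_conj_subset U.2
  have step (n : ℕ) (U W : {U : Set G // U ∈ 𝓝 1}) (i : ℕ) : ∃ V : {U : Set G // U ∈ 𝓝 1},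
      V.1⁻¹ = V.1 ∧ V.1 * V.1 ⊆ U.1 ∩ T n ∩ D W i := by
    obtain ⟨V, hV, -, hinv, hmul⟩ :=
      exists_closed_nhds_one_inv_eq_mul_subset (inter_mem (inter_mem U.2 (hT n)) (hD W i))
    exact ⟨⟨V, hV⟩, hinv, hmul⟩
  choose next hinv hmul using step
  set V := unpairRec ⟨univ, univ_mem⟩ next
  have hV (n : ℕ) : V (n + 1) = next n (V n) (V n.unpair.1) n.unpair.2 := unpairRec_succ ..
  have hsub (n : ℕ) : (V (n + 1)).1 ⊆ (V n).1 ∩ T n ∩ D (V n.unpair.1) n.unpair.2 :=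
    fun x hx => by
      rw [hV] at hx
      exact hmul _ _ _ _ ⟨x, hx, 1, mem_of_mem_nhds (next ..).2, mul_one x⟩
  refine ⟨⟨fun n => (V n).1, fun n => (V n).2, ?_, fun n => ?_, fun n g => ?_⟩,
    fun n => (hsub n).trans (inter_subset_left.trans inter_subset_right)⟩
  · rintro (_ | n)
    · simp only [V]
      rw [unpairRec]
      exact inv_univ
    · exact hV n ▸ hinv ..
  · exact hV n ▸ (hmul ..).trans (inter_subset_left.trans inter_subset_left)
  · obtain ⟨i, hi⟩ := hDconj (V n) g
    exact ⟨n.pair i + 1, fun x hx => hi x (by simpa using (hsub _ hx).2)⟩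

namespace NhdsChain

variable {G : Type u} [Group G] [TopologicalSpace G] (V : NhdsChain G)

theorem one_mem (n : ℕ) : (1 : G) ∈ V.set n :=
  mem_of_mem_nhds (V.mem_nhds n)

theorem antitone : Antitone V.set :=
  antitone_nat_of_succ_le fun n x hx => V.mul_subset n ⟨x, hx, 1, V.one_mem _, mul_one x⟩

def ker : Subgroup G where
  carrier := ⋂ n, V.set n
  one_mem' := mem_iInter.2 V.one_mem
  mul_mem' ha hb := mem_iInter.2 fun n =>
    V.mul_subset n ⟨_, mem_iInter.1 ha (n + 1), _, mem_iInter.1 hb (n + 1), rfl⟩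
  inv_mem' ha := mem_iInter.2 fun n => V.inv_eq n ▸ inv_mem_inv.2 (mem_iInter.1 ha n)

theorem mem_ker {x : G} : x ∈ V.ker ↔ ∀ n, x ∈ V.set n :=
  mem_iInter

theorem ker_subset (n : ℕ) : (V.ker : Set G) ⊆ V.set n :=
  fun _ hx => V.mem_ker.1 hx n

instance : V.ker.Normal :=
  ⟨fun x hx g => V.mem_ker.2 fun n => by
    obtain ⟨m, hm⟩ := V.exists_conj_subset n g
    exact hm x (V.mem_ker.1 hx m)⟩

/-- `G ⧸ V.ker` with the group topology whose identity neighbourhoods are generated by the images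
of the `V.set n`; it is coarser than the quotient topology of `G ⧸ V.ker`. -/
def Quot : Type u := G ⧸ V.ker

instance : Group V.Quot := inferInstanceAs (Group (G ⧸ V.ker))

def toQuot : G →* V.Quot := QuotientGroup.mk' V.ker

theorem toQuot_surjective : Surjective V.toQuot :=
  QuotientGroup.mk'_surjective _

theorem toQuot_eq_toQuot_iff {x y : G} : V.toQuot x = V.toQuot y ↔ x⁻¹ * y ∈ V.ker :=
  QuotientGroup.eq

@[reducible] def groupFilterBasis : GroupFilterBasis V.Quot where
  sets := range fun n => V.toQuot '' V.set n
  nonempty := range_nonempty _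
  inter_sets := by
    rintro _ _ ⟨m, rfl⟩ ⟨n, rfl⟩
    exact ⟨_, ⟨max m n, rfl⟩, subset_inter (image_mono (V.antitone (le_max_left m n)))
      (image_mono (V.antitone (le_max_right m n)))⟩
  one' := by
    rintro _ ⟨n, rfl⟩
    exact ⟨1, V.one_mem n, map_one _⟩
  mul' := by
    rintro _ ⟨n, rfl⟩
    exact ⟨_, ⟨n + 1, rfl⟩, image_mul V.toQuot ▸ image_mono (V.mul_subset n)⟩
  inv' := by
    rintro _ ⟨n, rfl⟩
    refine ⟨_, ⟨n, rfl⟩, ?_⟩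
    rintro _ ⟨x, hx, rfl⟩
    exact ⟨x⁻¹, V.inv_eq n ▸ inv_mem_inv.2 hx, map_inv _ _⟩
  conj' := by
    rintro y _ ⟨n, rfl⟩
    obtain ⟨g, rfl⟩ := V.toQuot_surjective y
    obtain ⟨m, hm⟩ := V.exists_conj_subset n g
    refine ⟨_, ⟨m, rfl⟩, ?_⟩
    rintro _ ⟨x, hx, rfl⟩
    exact ⟨_, hm x hx, by simp⟩

instance : TopologicalSpace V.Quot := V.groupFilterBasis.topology

instance : IsTopologicalGroup V.Quot := V.groupFilterBasis.isTopologicalGroup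

theorem nhds_one_hasBasis :
    (𝓝 (1 : V.Quot)).HasBasis (fun _ => True) fun n => V.toQuot '' V.set n :=
  V.groupFilterBasis.nhds_one_hasBasis.to_hasBasis (fun _ ⟨n, hn⟩ => ⟨n, trivial, hn.le⟩)
    fun n _ => ⟨_, ⟨n, rfl⟩, subset_rfl⟩

instance : T2Space V.Quot := by
  refine IsTopologicalGroup.t2Space_of_one_sep fun y hy => ?_
  obtain ⟨x, rfl⟩ := V.toQuot_surjective y
  obtain ⟨n, hn⟩ := not_forall.1 (V.mem_ker.not.1 ((QuotientGroup.eq_one_iff x).not.1 hy))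
  refine ⟨_, V.nhds_one_hasBasis.mem_of_mem (i := n + 1) trivial, ?_⟩
  rintro ⟨a, ha, hax⟩
  exact hn (V.mul_subset n
    ⟨a, ha, _, V.ker_subset _ (V.toQuot_eq_toQuot_iff.1 hax), mul_inv_cancel_left a x⟩)

instance : FirstCountableTopology V.Quot :=
  have := V.nhds_one_hasBasis.isCountablyGenerated
  IsTopologicalGroup.firstCountableTopology_of_nhds_one

variable [IsTopologicalGroup G]

theorem isClosed_ker : IsClosed (V.ker : Set G) :=
  isClosed_of_closure_subset fun _ hx => V.mem_ker.2 fun n => V.mul_subset n <|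
    closure_subset_mul_self_of_mem_nhds_one (V.mem_nhds (n + 1)) (closure_mono (V.ker_subset _) hx)

theorem continuous_toQuot : Continuous V.toQuot :=
  continuous_of_continuousAt_one V.toQuot <| by
    rw [ContinuousAt, map_one, V.nhds_one_hasBasis.tendsto_right_iff]
    exact fun n _ => mem_of_superset (V.mem_nhds n) (subset_preimage_image _ _)

theorem seqComplete (hs : SeqHComplete G) : SeqComplete V.Quot :=
  hs V.Quot V.toQuot V.continuous_toQuot V.toQuot_surjective

theorem omegaPrecompact (hω : OmegaPrecompact G) : OmegaPrecompact V.Quot :=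
  hω.of_surjective V.continuous_toQuot V.toQuot_surjective

/-- A finer chain `B` with `B.set 1 ⊆ W` defines a finer group topology on a quotient of `G`;
the open mapping theorem for `B.Quot → V.Quot` shows that `V.Quot` is no coarser. -/
theorem exists_subset_mul_ker (hω : OmegaPrecompact G) (hs : SeqHComplete G) {W : Set G}
    (hW : W ∈ 𝓝 1) : ∃ k, V.set k ⊆ W * V.ker := by
  obtain ⟨B, hB⟩ :=
    hω.exists_nhdsChain (fun n => W ∩ V.set n) fun n => inter_mem hW (V.mem_nhds n)
  have hker : B.ker ≤ V.ker := fun x hx => V.mem_ker.2 fun n => (hB n (B.ker_subset _ hx)).2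
  let φ : B.Quot →* V.Quot := QuotientGroup.map B.ker V.ker (MonoidHom.id G) hker
  have hφc : Continuous φ := continuous_of_continuousAt_one φ <| by
    rw [ContinuousAt, map_one, B.nhds_one_hasBasis.tendsto_iff V.nhds_one_hasBasis]
    refine fun n _ => ⟨n + 1, trivial, ?_⟩
    rintro _ ⟨x, hx, rfl⟩
    exact ⟨x, (hB n hx).2, rfl⟩
  have hφs : Surjective φ := fun y => (V.toQuot_surjective y).elim fun x hx => ⟨B.toQuot x, hx⟩
  have := (V.seqComplete hs).baireSpace
  have hopen := ((B.omegaPrecompact hω).isOpenMap (B.seqComplete hs) hφc hφs).image_mem_nhds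
    (B.nhds_one_hasBasis.mem_of_mem (i := 1) trivial)
  rw [map_one] at hopen
  obtain ⟨k, -, hk⟩ := V.nhds_one_hasBasis.mem_iff.1 hopen
  refine ⟨k, fun x hx => ?_⟩
  obtain ⟨_, ⟨y, hy, rfl⟩, hyx⟩ := hk ⟨x, hx, rfl⟩
  exact ⟨y, (hB 0 hy).1, y⁻¹ * x, V.toQuot_eq_toQuot_iff.1 hyx, mul_inv_cancel_left y x⟩

theorem metrizableSpace_quotient (hω : OmegaPrecompact G) (hs : SeqHComplete G) :
    TopologicalSpace.MetrizableSpace (G ⧸ V.ker) := by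
  have hbasis : (𝓝 (1 : G ⧸ V.ker)).HasBasis (fun _ => True)
      fun n => ((↑) : G → G ⧸ V.ker) '' V.set n := by
    rw [← QuotientGroup.mk_one, QuotientGroup.nhds_eq]
    refine ((𝓝 (1 : G)).basis_sets.map _).to_hasBasis (fun W hW => ?_)
      fun n _ => ⟨_, V.mem_nhds n, subset_rfl⟩
    obtain ⟨k, hk⟩ := V.exists_subset_mul_ker hω hs hW
    refine ⟨k, trivial, ?_⟩
    rintro _ ⟨x, hx, rfl⟩
    obtain ⟨w, hw, κ, hκ, rfl⟩ := hk hx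
    exact ⟨w, hw, (QuotientGroup.mk_mul_of_mem w hκ).symm⟩
  have := V.isClosed_ker
  have := hbasis.isCountablyGenerated
  have := IsTopologicalGroup.firstCountableTopology_of_nhds_one (G := G ⧸ V.ker)
  exact IsTopologicalGroup.metrizableSpace

end NhdsChain

theorem isInducing_pi_quotientMk {G ι : Type*} [Group G] [TopologicalSpace G]
    [IsTopologicalGroup G] (N : ι → Subgroup G) [∀ i, (N i).Normal]
    (hsmall : ∀ U ∈ 𝓝 (1 : G), ∃ i, (N i : Set G) ⊆ U) :
    IsInducing fun (g : G) (i : ι) => (g : G ⧸ N i) := by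
  let φ : G →* ∀ i, G ⧸ N i := MonoidHom.pi fun i => QuotientGroup.mk' (N i)
  have hφ : Continuous φ := continuous_pi fun _ => QuotientGroup.continuous_mk
  change IsInducing φ
  rw [IsTopologicalGroup.isInducing_iff_nhds_one]
  refine le_antisymm (hφ.tendsto' 1 1 (map_one φ)).le_comap fun U hU => ?_
  obtain ⟨V, hV, hVU⟩ := exists_nhds_one_split hU
  obtain ⟨i, hi⟩ := hsmall V hV
  refine mem_comap.2 ⟨(fun p => p i) ⁻¹' ((↑) '' V),
    (continuous_apply i).continuousAt.preimage_mem_nhds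
      (QuotientGroup.isOpenMap_coe.image_mem_nhds hV), ?_⟩
  rintro x ⟨v, hv, hvx⟩
  simpa using hVU v hv _ (hi (QuotientGroup.eq.1 hvx))

theorem nonempty_iInter_of_directed_of_small {X ι : Type*} [UniformSpace X] [CompleteSpace X]
    [Nonempty ι] {S : ι → Set X} (hdir : Directed (· ⊇ ·) S) (hne : ∀ i, (S i).Nonempty)
    (hclosed : ∀ i, IsClosed (S i)) (hsmall : ∀ U ∈ 𝓤 X, ∃ i, S i ×ˢ S i ⊆ U) :
    (⋂ i, S i).Nonempty := by
  have hS (i : ι) : S i ∈ ⨅ i, 𝓟 (S i) := mem_iInf_of_mem i (mem_principal_self _)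
  have : (⨅ i, 𝓟 (S i)).NeBot := iInf_neBot_of_directed'
    (fun i j => (hdir i j).imp fun _ hk => ⟨principal_mono.2 hk.1, principal_mono.2 hk.2⟩)
    fun i => principal_neBot_iff.2 (hne i)
  obtain ⟨x, hx⟩ := CompleteSpace.complete ⟨this, fun U hU =>
    let ⟨i, hi⟩ := hsmall U hU; mem_of_superset (prod_mem_prod (hS i) (hS i)) hi⟩
  exact ⟨x, mem_iInter.2 fun i =>
    (hclosed i).mem_of_tendsto (b := ⨅ i, 𝓟 (S i)) (f := id) hx (hS i)⟩

section MetrizableQuotients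

variable {G : Type u} [Group G] [TopologicalSpace G] [IsTopologicalGroup G]

instance MetQuotIdx.normal (N : MetQuotIdx G) : N.val.Normal :=
  N.prop.1

theorem OmegaPrecompact.exists_metQuotIdx_subset (hω : OmegaPrecompact G) (hs : SeqHComplete G)
    (T : ℕ → Set G) (hT : ∀ n, T n ∈ 𝓝 1) : ∃ N : MetQuotIdx G, ∀ n, (N.val : Set G) ⊆ T n := by
  obtain ⟨V, hV⟩ := hω.exists_nhdsChain T hT
  exact ⟨⟨V.ker, inferInstance, V.isClosed_ker, V.metrizableSpace_quotient hω hs⟩,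
    fun n => (V.ker_subset (n + 1)).trans (hV n)⟩

theorem MetQuotIdx.exists_iInter_subset (N : MetQuotIdx G) :
    ∃ A : ℕ → Set G, (∀ n, A n ∈ 𝓝 1) ∧ ⋂ n, A n ⊆ N.val := by
  have := N.prop.2.2
  obtain ⟨O, hO⟩ := (𝓝 (1 : G ⧸ N.val)).exists_antitone_basis
  refine ⟨fun n => (↑) ⁻¹' O n,
    fun n => QuotientGroup.continuous_mk.continuousAt.preimage_mem_nhds (hO.mem n), fun x hx => ?_⟩
  have h1 : (x : G ⧸ N.val) ∈ ⋂ (n) (_ : True), O n := by simpa using hx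
  rw [biInter_basis_nhds hO.toHasBasis] at h1
  exact (QuotientGroup.eq_one_iff x).1 h1

theorem OmegaPrecompact.exists_metQuotIdx_le (hω : OmegaPrecompact G) (hs : SeqHComplete G)
    (N M : MetQuotIdx G) : ∃ K : MetQuotIdx G, K.val ≤ N.val ∧ K.val ≤ M.val := by
  obtain ⟨A, hA, hAN⟩ := N.exists_iInter_subset
  obtain ⟨B, hB, hBM⟩ := M.exists_iInter_subset
  obtain ⟨K, hK⟩ := hω.exists_metQuotIdx_subset hs _ fun n => inter_mem (hA n) (hB n)
  exact ⟨K, fun x hx => hAN (mem_iInter.2 fun n => (hK n hx).1),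
    fun x hx => hBM (mem_iInter.2 fun n => (hK n hx).2)⟩

theorem range_canonMap_subset : range (canonMap G) ⊆ projLimit G := by
  rintro _ ⟨g, rfl⟩ N M _
  exact QuotientGroup.map_mk _ _ _ _ g

theorem projLimit_subset_range [CompleteSpace G]
    (hsmall : ∀ U ∈ 𝓝 (1 : G), ∃ N : MetQuotIdx G, (N.val : Set G) ⊆ U)
    (hdir : ∀ N M : MetQuotIdx G, ∃ K : MetQuotIdx G, K.val ≤ N.val ∧ K.val ≤ M.val) :
    projLimit G ⊆ range (canonMap G) := by
  intro x hx
  have : Nonempty (MetQuotIdx G) := (hsmall univ univ_mem).nonempty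
  have hfiber {K N : MetQuotIdx G} (h : K.val ≤ N.val) :
      (↑) ⁻¹' {x K} ⊆ ((↑) ⁻¹' {x N} : Set G) := by
    intro g hg
    simp only [mem_preimage, mem_singleton_iff] at hg ⊢
    rw [← hx K N h, ← hg]
    rfl
  obtain ⟨g, hg⟩ := nonempty_iInter_of_directed_of_small
    (S := fun N : MetQuotIdx G => ((↑) : G → G ⧸ N.val) ⁻¹' {x N})
    (fun N M => (hdir N M).imp fun _ hK => ⟨hfiber hK.1, hfiber hK.2⟩)
    (fun N => QuotientGroup.mk_surjective (x N))
    (fun N => have := N.prop.2.2; isClosed_singleton.preimage QuotientGroup.continuous_mk)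
    fun U hU => by
      obtain ⟨V, hV, hVU⟩ := mem_comap.1 hU
      obtain ⟨N, hN⟩ := hsmall V hV
      refine ⟨N, fun ⟨a, b⟩ ⟨ha, hb⟩ => hVU (hN ?_)⟩
      exact N.prop.1.mem_comm (QuotientGroup.eq.1 (ha.trans hb.symm))
  exact ⟨g, funext fun N => mem_iInter.1 hg N⟩

end MetrizableQuotients

/-- An ω-precompact sequentially h-complete h-complete group is topologically
isomorphic to the projective limit of its metrizable quotients: the canonical
map is an embedding with range exactly the projective limit. -/
theorem stmt8 (G : Type u) [Group G] [TopologicalSpace G] [IsTopologicalGroup G] [T2Space G]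
    (hω : OmegaPrecompact G) (hs : SeqHComplete G) (hh : HComplete G) :
    Topology.IsEmbedding (canonMap G) ∧ Set.range (canonMap G) = projLimit G := by
  have hsmall (U : Set G) (hU : U ∈ 𝓝 1) : ∃ N : MetQuotIdx G, (N.val : Set G) ⊆ U :=
    (hω.exists_metQuotIdx_subset hs (fun _ => U) fun _ => hU).imp fun _ h => h 0
  have : CompleteSpace G := hh G (MonoidHom.id G) continuous_id surjective_id
  exact ⟨(isInducing_pi_quotientMk (fun N : MetQuotIdx G => N.val) hsmall).isEmbedding,
    range_canonMap_subset.antisymm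
      (projLimit_subset_range hsmall (hω.exists_metQuotIdx_le hs))⟩
end

section
/- A complete Hausdorff topological group G is precompact if and only if every closed separable subgroup of G is precompact; in particular, G is compact if and only if every closed separable subgroup of G is precompact. -/
open Topology Pointwise

universe u

/-!
A topological group is precompact iff it contains no uniformly separated sequence: for every
identity neighbourhood `U` and every sequence `x`, some `x n * (x m)⁻¹` with `m < n` lies in `U`.
A separated sequence in a non-precompact group lies in the closure of the countable subgroup it
generates, a closed separable subgroup that is then not precompact either. Precompactness is
total boundedness of the right uniformity, so for complete groups it is equivalent to compactness.
-/

theorem Set.mem_mul_iff_exists_mul_inv_mem {G : Type*} [Group G] {U F : Set G} {x : G} :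
    x ∈ U * F ↔ ∃ y ∈ F, x * y⁻¹ ∈ U := by
  simp only [Set.mem_mul]
  constructor
  · rintro ⟨u, hu, y, hy, rfl⟩
    exact ⟨y, hy, by simpa using hu⟩
  · rintro ⟨y, hy, hxy⟩
    exact ⟨x * y⁻¹, hxy, y, hy, by group⟩

theorem Subgroup.isSeparable_topologicalClosure_closure {G : Type*} [Group G]
    [TopologicalSpace G] [IsTopologicalGroup G] {s : Set G} (hs : s.Countable) :
    TopologicalSpace.IsSeparable ((Subgroup.closure s).topologicalClosure : Set G) := by
  have : Countable s := hs.to_subtype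
  rw [Subgroup.topologicalClosure_coe, FreeGroup.closure_eq_range, MonoidHom.coe_range]
  exact (Set.countable_range _).isSeparable.closure

section

variable {G : Type u} [Group G] [TopologicalSpace G] [IsTopologicalGroup G]

theorem groupPrecompact_iff_forall_seq :
    GroupPrecompact G ↔
      ∀ U ∈ 𝓝 (1 : G), ∀ x : ℕ → G, ∃ m n, m < n ∧ x n * (x m)⁻¹ ∈ U := by
  constructor
  · intro hG U hU x
    obtain ⟨V, hV, -, hVinv, hVU⟩ := exists_closed_nhds_one_inv_eq_mul_subset hU
    obtain ⟨F, hF, hVF⟩ := hG V hV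
    have hx : ∀ n, ∃ y ∈ F, x n * y⁻¹ ∈ V := fun n =>
      Set.mem_mul_iff_exists_mul_inv_mem.mp (hVF ▸ Set.mem_univ (x n))
    choose y hyF hyV using hx
    obtain ⟨m, n, hmn, hy⟩ := hF.exists_lt_map_eq_of_forall_mem hyF
    refine ⟨m, n, hmn, hVU ?_⟩
    have hm : (x m * (y m)⁻¹)⁻¹ ∈ V := by rw [← Set.mem_inv, hVinv]; exact hyV m
    refine ⟨_, hyV n, _, hm, ?_⟩
    rw [hy]
    group
  · intro h
    by_contra hG
    simp only [GroupPrecompact, not_forall, not_exists, not_and] at hG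
    obtain ⟨U, hU, hUF⟩ := hG
    obtain ⟨x, -, hx⟩ := exists_seq_of_forall_finset_exists (fun _ : G => True)
      (fun a b => b * a⁻¹ ∉ U) fun F _ => by
        obtain ⟨y, hy⟩ := (Set.ne_univ_iff_exists_notMem _).mp (hUF F F.finite_toSet)
        exact ⟨y, trivial, fun a ha hya =>
          hy (Set.mem_mul_iff_exists_mul_inv_mem.mpr ⟨a, ha, hya⟩)⟩
    obtain ⟨m, n, hmn, hxU⟩ := h U hU x
    exact hx m n hmn hxU

theorem GroupPrecompact.subgroup (hG : GroupPrecompact G) (H : Subgroup G) :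
    GroupPrecompact H := by
  rw [groupPrecompact_iff_forall_seq] at hG ⊢
  intro U hU x
  obtain ⟨V, hV, hVU⟩ := (IsInducing.subtypeVal.nhds_eq_comap (1 : H) ▸ hU :)
  obtain ⟨m, n, hmn, hxV⟩ := hG V hV fun n => x n
  exact ⟨m, n, hmn, hVU hxV⟩

theorem groupPrecompact_of_forall_isClosed_isSeparable
    (h : ∀ H : Subgroup G, IsClosed (H : Set G) → TopologicalSpace.IsSeparable (H : Set G) →
      GroupPrecompact H) :
    GroupPrecompact G := by
  rw [groupPrecompact_iff_forall_seq]
  intro U hU x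
  set H := (Subgroup.closure (Set.range x)).topologicalClosure
  have hxH : ∀ n, x n ∈ H := fun n =>
    Subgroup.le_topologicalClosure _ (Subgroup.subset_closure (Set.mem_range_self n))
  have hH : GroupPrecompact H := h H (Subgroup.isClosed_topologicalClosure _)
    (Subgroup.isSeparable_topologicalClosure_closure (Set.countable_range x))
  rw [groupPrecompact_iff_forall_seq] at hH
  exact hH _ (continuous_subtype_val.continuousAt.preimage_mem_nhds hU)
    fun n => ⟨x n, hxH n⟩

theorem groupPrecompact_iff_totallyBounded_univ :
    GroupPrecompact G ↔ @TotallyBounded G (IsTopologicalGroup.rightUniformSpace G) Set.univ := by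
  let := IsTopologicalGroup.rightUniformSpace G
  have hbasis := ((𝓝 (1 : G)).basis_sets.map Inv.inv).comap fun p : G × G => p.2 * p.1⁻¹
  rw [nhds_one_symm', ← uniformity_eq_comap_nhds_one'] at hbasis
  rw [hbasis.totallyBounded_iff]
  refine forall₂_congr fun U _ => exists_congr fun F => and_congr_right fun _ => ?_
  simp [Set.eq_univ_iff_forall, Set.subset_def, Set.mem_mul_iff_exists_mul_inv_mem]

theorem compactSpace_iff_groupPrecompact
    (hc : @CompleteSpace G (IsTopologicalGroup.rightUniformSpace G)) :
    CompactSpace G ↔ GroupPrecompact G := by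
  let := IsTopologicalGroup.rightUniformSpace G
  rw [groupPrecompact_iff_totallyBounded_univ, ← isCompact_univ_iff,
    isCompact_iff_totallyBounded_isComplete]
  exact and_iff_left isComplete_univ

end

theorem stmt10_general (G : Type u) [Group G] [TopologicalSpace G] [IsTopologicalGroup G]
    (hc : @CompleteSpace G (IsTopologicalGroup.rightUniformSpace G)) :
    (GroupPrecompact G ↔
      ∀ H : Subgroup G, IsClosed (H : Set G) → TopologicalSpace.IsSeparable (H : Set G) →
        GroupPrecompact H) ∧
    (CompactSpace G ↔
      ∀ H : Subgroup G, IsClosed (H : Set G) → TopologicalSpace.IsSeparable (H : Set G) →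
        GroupPrecompact H) := by
  have hprecompact : GroupPrecompact G ↔
      ∀ H : Subgroup G, IsClosed (H : Set G) → TopologicalSpace.IsSeparable (H : Set G) →
        GroupPrecompact H :=
    ⟨fun hG H _ _ => hG.subgroup H, groupPrecompact_of_forall_isClosed_isSeparable⟩
  exact ⟨hprecompact, (compactSpace_iff_groupPrecompact hc).trans hprecompact⟩

/-- A complete group is precompact iff every closed separable subgroup is
precompact; in particular it is compact iff every closed separable subgroup is
precompact. -/
theorem stmt10 (G : Type u) [Group G] [TopologicalSpace G] [IsTopologicalGroup G] [T2Space G]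
    (hc : @CompleteSpace G (IsTopologicalGroup.rightUniformSpace G)) :
    (GroupPrecompact G ↔
      ∀ H : Subgroup G, IsClosed (H : Set G) → TopologicalSpace.IsSeparable (H : Set G) →
        GroupPrecompact H) ∧
    (CompactSpace G ↔
      ∀ H : Subgroup G, IsClosed (H : Set G) → TopologicalSpace.IsSeparable (H : Set G) →
        GroupPrecompact H) :=
  stmt10_general G hc
end

section
/- Let H be an h-complete Hausdorff topological group that is MAP, and let N be a closed normal subgroup of H that is h-complete. Then the quotient H/N is MAP. -/
open Topology Pointwise

universe u

/-
Let `f : H → K` be a continuous injective homomorphism into a compact group. Since `H` is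
h-complete, the image `f H` is complete, hence closed, hence compact, so we may assume `f` is
onto. Since `N` is h-complete, `f N` is a closed normal subgroup of `f H`, so `f H ⧸ f N` is a
compact Hausdorff group, and `f` induces a continuous injective homomorphism
`H ⧸ N → f H ⧸ f N`.
-/

section CompleteSubgroup

variable {K : Type*} [Group K] [TopologicalSpace K] [IsTopologicalGroup K]

lemma Subgroup.comap_subtype_rightUniformSpace (S : Subgroup K) :
    (IsTopologicalGroup.rightUniformSpace K).comap (Subtype.val : S → K) =
      IsTopologicalGroup.rightUniformSpace S := by
  apply UniformSpace.ext
  rw [uniformity_comap]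
  change Filter.comap _ (Filter.comap (fun p : K × K => p.2 * p.1⁻¹) (𝓝 1)) =
    Filter.comap (fun p : S × S => p.2 * p.1⁻¹) (𝓝 1)
  rw [Filter.comap_comap, nhds_induced, Filter.comap_comap]
  rfl

lemma Subgroup.isClosed_of_completeSpace [T2Space K] (S : Subgroup K)
    (hS : @CompleteSpace S (IsTopologicalGroup.rightUniformSpace S)) :
    IsClosed (S : Set K) := by
  let : UniformSpace K := IsTopologicalGroup.rightUniformSpace K
  have : CompleteSpace S := by
    rwa [← S.comap_subtype_rightUniformSpace] at hS
  exact (completeSpace_coe_iff_isComplete.mp this).isClosed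

end CompleteSubgroup

section HComplete

variable {G K : Type u} [Group G] [TopologicalSpace G]
  [Group K] [TopologicalSpace K] [IsTopologicalGroup K]

lemma HComplete.isClosed_range [T2Space K] (hG : HComplete G) (f : G →* K)
    (hf : Continuous f) : IsClosed (f.range : Set K) :=
  f.range.isClosed_of_completeSpace
    (hG f.range f.rangeRestrict (hf.subtype_mk _) f.rangeRestrict_surjective)

lemma HComplete.isClosed_map [T2Space K] {S : Subgroup G} (hS : HComplete S) (f : G →* K)
    (hf : Continuous f) : IsClosed (S.map f : Set K) := by
  rw [← Subgroup.range_subtype S, ← MonoidHom.range_comp]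
  exact hS.isClosed_range _ (hf.comp continuous_subtype_val)

end HComplete

lemma MAP.quotient_of_isClosed_map {G K : Type u} [Group G] [TopologicalSpace G]
    [IsTopologicalGroup G] [Group K] [TopologicalSpace K] [IsTopologicalGroup K] [T2Space K]
    [CompactSpace K] (f : G →* K) (hf : Continuous f) (hinj : Function.Injective f)
    (N : Subgroup G) [N.Normal] [(N.map f).Normal] (hN : IsClosed (N.map f : Set K)) :
    MAP (G ⧸ N) := by
  have : IsClosed (N.map f : Set K) := hN
  refine ⟨K ⧸ N.map f, inferInstance, inferInstance, inferInstance, inferInstance,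
    inferInstance, QuotientGroup.map N (N.map f) f (Subgroup.le_comap_map f N), ?_, ?_⟩
  · rw [isQuotientMap_quotient_mk'.continuous_iff]
    exact continuous_quot_mk.comp hf
  · rw [← MonoidHom.ker_eq_bot_iff, QuotientGroup.ker_map,
      Subgroup.comap_map_eq_self_of_injective hinj, QuotientGroup.map_mk'_self]

theorem stmt13_general (H : Type u) [Group H] [TopologicalSpace H] [IsTopologicalGroup H]
    (hh : HComplete H) (hmap : MAP H)
    (N : Subgroup H) [N.Normal] (hN : HComplete N) :
    MAP (H ⧸ N) := by
  obtain ⟨K, _, _, _, _, _, f, hf, hinj⟩ := hmap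
  have : CompactSpace f.range :=
    isCompact_iff_compactSpace.mp (hh.isClosed_range f hf).isCompact
  have : (N.map f.rangeRestrict).Normal :=
    Subgroup.Normal.map inferInstance _ f.rangeRestrict_surjective
  exact MAP.quotient_of_isClosed_map f.rangeRestrict (hf.subtype_mk _)
    (f.rangeRestrict_injective_iff.mpr hinj) N (hN.isClosed_map _ (hf.subtype_mk _))

/-- If `H` is h-complete and MAP and `N` is a closed normal h-complete
subgroup, then `H ⧸ N` is MAP. -/
theorem stmt13 (H : Type u) [Group H] [TopologicalSpace H] [IsTopologicalGroup H] [T2Space H]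
    (hh : HComplete H) (hmap : MAP H)
    (N : Subgroup H) [N.Normal] (hcl : IsClosed (N : Set H)) (hN : HComplete N) :
    MAP (H ⧸ N) :=
  stmt13_general H hh hmap N hN
end
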